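/- Let m be a positive even integer. Let G = G_0 × G_1 × G_1 where G_0 is an elementary abelian group of order 3 and G_1 an elementary abelian group of order 3^m. Suppose G_1 contains a Paley partial difference set P' with parameters (3^m, (3^m-1)/2, (3^m-5)/4, (3^m-1)/4), and let D' = P' - (G_1 \ (P' ∪ {0})), a (3^m, 3^m - 1, -1)-signed difference set. Fix x_0 ∈ G_0 \ {0} and x_1 ∈ G_1, and define the signed set D = (x_0, 0, G_1) + (0, G_1, x_1) + (0, D', D') ∈ Z[G] (where (0, D', D') denotes Σ_{a,b} s_a s_b (0,a,b) over signed elements of D'). Then D is a signed difference set in G with parameters (3^{2m+1}, 3^{2m} + 1, 1). -/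

import Mathlib

open Finset

noncomputable def eltA {H : Type*} [AddGroup H] (S : Finset H) : AddMonoidAlgebra ℤ H :=
  ∑ s ∈ S, AddMonoidAlgebra.single s 1

noncomputable def starA {H : Type*} [AddGroup H] [Fintype H]
    (A : AddMonoidAlgebra ℤ H) : AddMonoidAlgebra ℤ H :=
  ∑ h : H, AddMonoidAlgebra.single (-h) (A.coeff h)

namespace SDSAux

set_option linter.unusedSectionVars false

variable {H H' : Type*} [AddCommGroup H] [Fintype H] [AddCommGroup H'] [Fintype H']

lemma negHom_apply (h : H) : negAddMonoidHom h = -h := rfl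

lemma eq_sum_single (A : AddMonoidAlgebra ℤ H) :
    A = ∑ h : H, AddMonoidAlgebra.single h (A.coeff h) := by
  classical
  ext x
  rw [AddMonoidAlgebra.coeff_sum, Finsupp.finset_sum_apply]
  simp [Finsupp.single_apply]

lemma map_eq_sum (φ : H →+ H') (A : AddMonoidAlgebra ℤ H) :
    AddMonoidAlgebra.mapDomainRingHom ℤ φ A
      = ∑ h : H, AddMonoidAlgebra.single (φ h) (A.coeff h) := by
  classical
  show AddMonoidAlgebra.mapDomain (φ : H → H') A = _
  rw [AddMonoidAlgebra.mapDomain, Finsupp.mapDomain, Finsupp.sum, AddMonoidAlgebra.ofCoeff_sum]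
  apply Finset.sum_subset (Finset.subset_univ _)
  intro x _ hx
  simp [Finsupp.notMem_support_iff.mp hx]

lemma mapDRH_apply (φ : H →+ H') (A : AddMonoidAlgebra ℤ H) :
    AddMonoidAlgebra.mapDomainRingHom ℤ φ A = AddMonoidAlgebra.mapDomain (φ : H → H') A := rfl

lemma starA_eq (A : AddMonoidAlgebra ℤ H) :
    starA A = AddMonoidAlgebra.mapDomainRingHom ℤ (negAddMonoidHom (α := H)) A := by
  rw [map_eq_sum]
  rfl

lemma starA_mul (A B : AddMonoidAlgebra ℤ H) : starA (A * B) = starA A * starA B := by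
  simp [starA_eq, map_mul]

lemma starA_add (A B : AddMonoidAlgebra ℤ H) : starA (A + B) = starA A + starA B := by
  simp [starA_eq, map_add]

lemma starA_single (x : H) (c : ℤ) :
    starA (AddMonoidAlgebra.single x c) = AddMonoidAlgebra.single (-x) c := by
  rw [starA_eq, mapDRH_apply, AddMonoidAlgebra.mapDomain_single]
  rfl

lemma star_map (φ : H →+ H') (A : AddMonoidAlgebra ℤ H) :
    starA (AddMonoidAlgebra.mapDomainRingHom ℤ φ A)
      = AddMonoidAlgebra.mapDomainRingHom ℤ φ (starA A) := by
  rw [starA_eq, starA_eq, ← RingHom.comp_apply, ← RingHom.comp_apply,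
    ← AddMonoidAlgebra.mapDomainRingHom_comp, ← AddMonoidAlgebra.mapDomainRingHom_comp]
  rw [show (negAddMonoidHom (α := H')).comp φ = φ.comp negAddMonoidHom from by
    ext x
    simp [negHom_apply, map_neg]]

lemma eltA_apply [DecidableEq H] (S : Finset H) (x : H) :
    (eltA S).coeff x = if x ∈ S then 1 else 0 := by
  unfold eltA
  rw [AddMonoidAlgebra.coeff_sum, Finsupp.finset_sum_apply]
  simp [Finsupp.single_apply]

lemma sum_eltA (S : Finset H) : ∑ h : H, (eltA S).coeff h = (S.card : ℤ) := by
  classical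
  simp [eltA_apply]

lemma starA_eltA (S : Finset H) (hS : ∀ s ∈ S, -s ∈ S) : starA (eltA S) = eltA S := by
  rw [starA_eq, eltA, map_sum]
  simp only [mapDRH_apply, AddMonoidAlgebra.mapDomain_single, negHom_apply]
  exact Finset.sum_nbij' (fun s => -s) (fun s => -s) hS hS
    (fun a _ => neg_neg a) (fun a _ => neg_neg a) (fun a _ => rfl)

lemma univ_mul_single (g : H) (c : ℤ) :
    eltA (univ : Finset H) * AddMonoidAlgebra.single g c = c • eltA univ := by
  unfold eltA
  rw [Finset.sum_mul, Finset.smul_sum]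
  rw [← Equiv.sum_comp (Equiv.addRight g) (fun t => c • AddMonoidAlgebra.single t (1 : ℤ))]
  refine Finset.sum_congr rfl fun s _ => ?_
  rw [AddMonoidAlgebra.single_mul_single]
  simp [Finsupp.smul_single]

lemma univ_mul (A : AddMonoidAlgebra ℤ H) :
    eltA (univ : Finset H) * A = (∑ h : H, A.coeff h) • eltA univ := by
  conv_lhs => rw [eq_sum_single A]
  rw [Finset.mul_sum, Finset.sum_smul]
  exact Finset.sum_congr rfl fun h _ => univ_mul_single h (A.coeff h)

end SDSAux

open SDSAux AddMonoidAlgebra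

/-- the product construction of a `(3^{2m+1}, 3^{2m}+1, 1)`-signed
difference set in `G₀ × G₁ × G₁` from a Paley PDS `P'` in the elementary
abelian `3`-group `G₁` of order `3^m`, `m` even and positive. -/
theorem sds_product_three_group
    {G₀ G₁ : Type*} [AddCommGroup G₀] [Fintype G₀] [AddCommGroup G₁] [Fintype G₁]
    [DecidableEq G₁]
    (m : ℕ) (hm : Even m) (hmpos : 0 < m)
    (hcard0 : Fintype.card G₀ = 3) (hcard1 : Fintype.card G₁ = 3 ^ m)
    (helem0 : ∀ x : G₀, x + x + x = 0) (helem1 : ∀ x : G₁, x + x + x = 0)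
    (P' : Finset G₁) (k' : ℕ) (lam' mu' : ℤ)
    (hk' : 2 * (k' : ℤ) = 3 ^ m - 1) (hk'card : k' = P'.card)
    (hlam' : 4 * lam' = 3 ^ m - 5) (hmu' : 4 * mu' = 3 ^ m - 1)
    (hreg1 : (0 : G₁) ∉ P') (hreg2 : ∀ d ∈ P', -d ∈ P')
    (hPDS : eltA P' * starA (eltA P') =
      lam' • eltA P' +
        mu' • (eltA (univ : Finset G₁) - eltA P' - AddMonoidAlgebra.single 0 1) +
        (k' : ℤ) • AddMonoidAlgebra.single 0 1)
    (N' : Finset G₁) (hN' : N' = univ \ (P' ∪ {0}))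
    (D' : AddMonoidAlgebra ℤ G₁) (hD' : D' = eltA P' - eltA N')
    (x₀ : G₀) (hx₀ : x₀ ≠ 0) (x₁ : G₁)
    (D : AddMonoidAlgebra ℤ (G₀ × G₁ × G₁))
    (hD : D = (∑ g : G₁, AddMonoidAlgebra.single (x₀, 0, g) 1) +
        (∑ g : G₁, AddMonoidAlgebra.single ((0 : G₀), g, x₁) 1) +
        (∑ a : G₁, ∑ b : G₁, AddMonoidAlgebra.single ((0 : G₀), a, b) (D'.coeff a * D'.coeff b))) :
    D * starA D =
      (1 : ℤ) • (eltA (univ : Finset (G₀ × G₁ × G₁)) - AddMonoidAlgebra.single 0 1) +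
        ((3 ^ (2 * m) + 1 : ℤ)) • AddMonoidAlgebra.single 0 1 := by
  classical
  -- ## Level-1 facts (in AddMonoidAlgebra ℤ G₁)
  have hNsym : ∀ s ∈ N', -s ∈ N' := by
    intro s hs
    rw [hN'] at hs ⊢
    simp only [Finset.mem_sdiff, Finset.mem_union, Finset.mem_singleton, Finset.mem_univ,
      true_and, not_or, neg_eq_zero] at hs ⊢
    refine ⟨fun h => hs.1 ?_, hs.2⟩
    simpa using hreg2 _ h
  have hNP : eltA N' = eltA (univ : Finset G₁) - eltA P' - AddMonoidAlgebra.single 0 1 := by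
    ext x
    rw [AddMonoidAlgebra.coeff_sub, AddMonoidAlgebra.coeff_sub, Finsupp.sub_apply, Finsupp.sub_apply]
    rw [eltA_apply, eltA_apply, eltA_apply, AddMonoidAlgebra.coeff_single, Finsupp.single_apply]
    subst hN'
    simp only [Finset.mem_sdiff, Finset.mem_union, Finset.mem_singleton, Finset.mem_univ,
      true_and, not_or, if_true]
    by_cases h1 : x ∈ P' <;> by_cases h2 : x = 0 <;> simp [h1, h2, eq_comm, hreg1]
  have hcardN : (N'.card : ℤ) = 3 ^ m - 1 - k' := by
    have hsub : P' ∪ {0} ⊆ univ := Finset.subset_univ _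
    have hdisj : Disjoint P' ({0} : Finset G₁) := by
      simp [Finset.disjoint_singleton_right, hreg1]
    have : N'.card = Fintype.card G₁ - (P'.card + 1) := by
      rw [hN', Finset.card_sdiff_of_subset hsub, Finset.card_univ, Finset.card_union_of_disjoint hdisj,
        Finset.card_singleton]
    rw [this, hcard1, ← hk'card]
    have hle : k' + 1 ≤ 3 ^ m := by
      have h1 : (k' : ℤ) + 1 ≤ 3 ^ m := by linarith [hk', Int.natCast_nonneg k']
      exact_mod_cast h1
    push_cast [Nat.cast_sub hle]
    ring
  have hDsum : ∑ h : G₁, D'.coeff h = 0 := by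
    rw [hD']
    have : ∀ h : G₁, (eltA P' - eltA N').coeff h = (eltA P').coeff h - (eltA N').coeff h := fun h => rfl
    simp only [this, Finset.sum_sub_distrib, sum_eltA]
    rw [← hk'card, hcardN]
    linarith [hk']
  have hJD : eltA (univ : Finset G₁) * D' = 0 := by
    rw [univ_mul, hDsum, zero_smul]
  have hJJ : eltA (univ : Finset G₁) * eltA (univ : Finset G₁)
      = ((3 : ℤ) ^ m) • eltA (univ : Finset G₁) := by
    rw [univ_mul, sum_eltA, Finset.card_univ, hcard1]
    norm_num
  have hPJ : eltA (univ : Finset G₁) * eltA P' = (k' : ℤ) • eltA (univ : Finset G₁) := by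
    rw [univ_mul, sum_eltA, ← hk'card]
  have hstarP : starA (eltA P') = eltA P' := starA_eltA _ hreg2
  have hstarN : starA (eltA N') = eltA N' := starA_eltA _ hNsym
  have hstarJ : starA (eltA (univ : Finset G₁)) = eltA (univ : Finset G₁) :=
    starA_eltA _ (fun s _ => Finset.mem_univ _)
  have hstarD : starA D' = D' := by
    rw [hD', starA_eq, map_sub, ← starA_eq, ← starA_eq, hstarP, hstarN]
  have hPP := hPDS
  rw [hstarP, ← AddMonoidAlgebra.one_def] at hPP
  have hD'sq : D' * D' = ((3 : ℤ) ^ m) • (1 : AddMonoidAlgebra ℤ G₁)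
      - eltA (univ : Finset G₁) := by
    have ck : (2 : AddMonoidAlgebra ℤ G₁) * (k' : ℕ) = 3 ^ m - 1 := by
      have := congrArg (fun n : ℤ => (n : AddMonoidAlgebra ℤ G₁)) hk'
      push_cast at this ⊢
      linear_combination this
    have clam : (4 : AddMonoidAlgebra ℤ G₁) * (lam' : ℤ) = 3 ^ m - 5 := by
      have := congrArg (fun n : ℤ => (n : AddMonoidAlgebra ℤ G₁)) hlam'
      push_cast at this ⊢
      linear_combination this
    have cmu : (4 : AddMonoidAlgebra ℤ G₁) * (mu' : ℤ) = 3 ^ m - 1 := by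
      have := congrArg (fun n : ℤ => (n : AddMonoidAlgebra ℤ G₁)) hmu'
      push_cast at this ⊢
      linear_combination this
    rw [hD', hNP, ← AddMonoidAlgebra.one_def]
    simp only [zsmul_eq_mul] at hPP hPJ hJJ ⊢
    push_cast at hPP hPJ hJJ ⊢
    linear_combination (4 : AddMonoidAlgebra ℤ G₁) * hPP - 4 * hPJ + hJJ
      + (eltA P') * clam + (eltA (univ : Finset G₁) - eltA P' - 1) * cmu
      + (2 - 2 * eltA (univ : Finset G₁)) * ck
  -- ## Level-2: the product group
  set φ₀ : G₀ →+ G₀ × G₁ × G₁ := AddMonoidHom.inl G₀ (G₁ × G₁) with hφ₀def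
  set φ₁ : G₁ →+ G₀ × G₁ × G₁ :=
    (AddMonoidHom.inr G₀ (G₁ × G₁)).comp (AddMonoidHom.inl G₁ G₁) with hφ₁def
  set φ₂ : G₁ →+ G₀ × G₁ × G₁ :=
    (AddMonoidHom.inr G₀ (G₁ × G₁)).comp (AddMonoidHom.inr G₁ G₁) with hφ₂def
  have hφ₀a : ∀ x : G₀, φ₀ x = (x, (0 : G₁), (0 : G₁)) := fun _ => rfl
  have hφ₁a : ∀ x : G₁, φ₁ x = ((0 : G₀), x, (0 : G₁)) := fun _ => rfl
  have hφ₂a : ∀ x : G₁, φ₂ x = ((0 : G₀), (0 : G₁), x) := fun _ => rfl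
  have hsing0 : ∀ x : G₀, mapDomainRingHom ℤ φ₀ (AddMonoidAlgebra.single x (1 : ℤ))
      = AddMonoidAlgebra.single (x, (0 : G₁), (0 : G₁)) (1 : ℤ) := by
    intro x
    rw [mapDRH_apply, AddMonoidAlgebra.mapDomain_single, hφ₀a]
  have hsing2 : ∀ x : G₁, mapDomainRingHom ℤ φ₂ (AddMonoidAlgebra.single x (1 : ℤ))
      = AddMonoidAlgebra.single ((0 : G₀), (0 : G₁), x) (1 : ℤ) := by
    intro x
    rw [mapDRH_apply, AddMonoidAlgebra.mapDomain_single, hφ₂a]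
  have hmapJ : ∀ φ : G₁ →+ G₀ × G₁ × G₁,
      mapDomainRingHom ℤ φ (eltA (univ : Finset G₁))
        = ∑ g : G₁, AddMonoidAlgebra.single (φ g) (1 : ℤ) := by
    intro φ
    rw [map_eq_sum]
    refine Finset.sum_congr rfl fun h _ => ?_
    rw [eltA_apply]
    simp
  have hmap0 : mapDomainRingHom ℤ φ₀ (eltA (univ : Finset G₀))
      = ∑ x : G₀, AddMonoidAlgebra.single (φ₀ x) (1 : ℤ) := by
    classical
    rw [map_eq_sum]
    refine Finset.sum_congr rfl fun h _ => ?_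
    rw [eltA_apply]
    simp
  have piece1 : mapDomainRingHom ℤ φ₀ (AddMonoidAlgebra.single x₀ (1 : ℤ)) *
      mapDomainRingHom ℤ φ₂ (eltA (univ : Finset G₁))
        = ∑ g : G₁, AddMonoidAlgebra.single (x₀, (0 : G₁), g) (1 : ℤ) := by
    rw [hsing0, hmapJ, Finset.mul_sum]
    refine Finset.sum_congr rfl fun g _ => ?_
    rw [AddMonoidAlgebra.single_mul_single]
    congr 1
    simp [hφ₂a, Prod.mk_add_mk]
  have piece2 : mapDomainRingHom ℤ φ₁ (eltA (univ : Finset G₁)) *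
      mapDomainRingHom ℤ φ₂ (AddMonoidAlgebra.single x₁ (1 : ℤ))
        = ∑ g : G₁, AddMonoidAlgebra.single ((0 : G₀), g, x₁) (1 : ℤ) := by
    rw [hsing2, hmapJ, Finset.sum_mul]
    refine Finset.sum_congr rfl fun g _ => ?_
    rw [AddMonoidAlgebra.single_mul_single]
    congr 1
    simp [hφ₁a, Prod.mk_add_mk]
  have piece3 : mapDomainRingHom ℤ φ₁ D' * mapDomainRingHom ℤ φ₂ D'
      = ∑ a : G₁, ∑ b : G₁, AddMonoidAlgebra.single ((0 : G₀), a, b) (D'.coeff a * D'.coeff b) := by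
    rw [map_eq_sum, map_eq_sum, Finset.sum_mul_sum]
    refine Finset.sum_congr rfl fun a _ => Finset.sum_congr rfl fun b _ => ?_
    rw [AddMonoidAlgebra.single_mul_single]
    congr 1
    simp [hφ₁a, hφ₂a, Prod.mk_add_mk]
  have hDfact : D = mapDomainRingHom ℤ φ₀ (AddMonoidAlgebra.single x₀ (1 : ℤ)) *
      mapDomainRingHom ℤ φ₂ (eltA (univ : Finset G₁)) +
      mapDomainRingHom ℤ φ₁ (eltA (univ : Finset G₁)) *
      mapDomainRingHom ℤ φ₂ (AddMonoidAlgebra.single x₁ (1 : ℤ)) +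
      mapDomainRingHom ℤ φ₁ D' * mapDomainRingHom ℤ φ₂ D' := by
    rw [hD, piece1, piece2, piece3]
  have hSfact : starA D = mapDomainRingHom ℤ φ₀ (AddMonoidAlgebra.single (-x₀) (1 : ℤ)) *
      mapDomainRingHom ℤ φ₂ (eltA (univ : Finset G₁)) +
      mapDomainRingHom ℤ φ₁ (eltA (univ : Finset G₁)) *
      mapDomainRingHom ℤ φ₂ (AddMonoidAlgebra.single (-x₁) (1 : ℤ)) +
      mapDomainRingHom ℤ φ₁ D' * mapDomainRingHom ℤ φ₂ D' := by
    rw [hDfact, starA_add, starA_add, starA_mul, starA_mul, starA_mul,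
      star_map, star_map, star_map, star_map, star_map, star_map,
      starA_single, starA_single, hstarJ, hstarD]
  have f1 : mapDomainRingHom ℤ φ₂ (eltA (univ : Finset G₁)) *
      mapDomainRingHom ℤ φ₂ (eltA (univ : Finset G₁))
      = ((3 : ℤ) ^ m) • mapDomainRingHom ℤ φ₂ (eltA (univ : Finset G₁)) := by
    rw [← map_mul, hJJ, map_zsmul]
  have f2 : mapDomainRingHom ℤ φ₁ (eltA (univ : Finset G₁)) *
      mapDomainRingHom ℤ φ₁ (eltA (univ : Finset G₁))
      = ((3 : ℤ) ^ m) • mapDomainRingHom ℤ φ₁ (eltA (univ : Finset G₁)) := by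
    rw [← map_mul, hJJ, map_zsmul]
  have f3 : mapDomainRingHom ℤ φ₁ (eltA (univ : Finset G₁)) * mapDomainRingHom ℤ φ₁ D' = 0 := by
    rw [← map_mul, hJD, map_zero]
  have f4 : mapDomainRingHom ℤ φ₂ (eltA (univ : Finset G₁)) * mapDomainRingHom ℤ φ₂ D' = 0 := by
    rw [← map_mul, hJD, map_zero]
  have f5 : mapDomainRingHom ℤ φ₁ D' * mapDomainRingHom ℤ φ₁ D'
      = ((3 : ℤ) ^ m) • (1 : AddMonoidAlgebra ℤ (G₀ × G₁ × G₁))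
        - mapDomainRingHom ℤ φ₁ (eltA (univ : Finset G₁)) := by
    rw [← map_mul, hD'sq, map_sub, map_zsmul, map_one]
  have f6 : mapDomainRingHom ℤ φ₂ D' * mapDomainRingHom ℤ φ₂ D'
      = ((3 : ℤ) ^ m) • (1 : AddMonoidAlgebra ℤ (G₀ × G₁ × G₁))
        - mapDomainRingHom ℤ φ₂ (eltA (univ : Finset G₁)) := by
    rw [← map_mul, hD'sq, map_sub, map_zsmul, map_one]
  have hJs : ∀ y : G₁, eltA (univ : Finset G₁) * AddMonoidAlgebra.single y (1 : ℤ)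
      = eltA (univ : Finset G₁) := by
    intro y
    rw [univ_mul_single, one_smul]
  have f7a : mapDomainRingHom ℤ φ₂ (eltA (univ : Finset G₁)) *
      mapDomainRingHom ℤ φ₂ (AddMonoidAlgebra.single x₁ (1 : ℤ))
      = mapDomainRingHom ℤ φ₂ (eltA (univ : Finset G₁)) := by
    rw [← map_mul, hJs]
  have f7b : mapDomainRingHom ℤ φ₂ (eltA (univ : Finset G₁)) *
      mapDomainRingHom ℤ φ₂ (AddMonoidAlgebra.single (-x₁) (1 : ℤ))
      = mapDomainRingHom ℤ φ₂ (eltA (univ : Finset G₁)) := by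
    rw [← map_mul, hJs]
  have f8 : mapDomainRingHom ℤ φ₀ (AddMonoidAlgebra.single x₀ (1 : ℤ)) *
      mapDomainRingHom ℤ φ₀ (AddMonoidAlgebra.single (-x₀) (1 : ℤ)) = 1 := by
    rw [← map_mul, AddMonoidAlgebra.single_mul_single, add_neg_cancel, one_mul,
      ← AddMonoidAlgebra.one_def, map_one]
  have f10 : mapDomainRingHom ℤ φ₂ (AddMonoidAlgebra.single x₁ (1 : ℤ)) *
      mapDomainRingHom ℤ φ₂ (AddMonoidAlgebra.single (-x₁) (1 : ℤ)) = 1 := by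
    rw [← map_mul, AddMonoidAlgebra.single_mul_single, add_neg_cancel, one_mul,
      ← AddMonoidAlgebra.one_def, map_one]
  -- G₀ = {0, x₀, -x₀}
  classical
  have hxne : x₀ ≠ -x₀ := by
    intro h
    apply hx₀
    have h2 : x₀ + x₀ = 0 := by nth_rewrite 1 [h]; exact neg_add_cancel x₀
    have h3 := helem0 x₀
    rw [h2, zero_add] at h3
    exact h3
  have hx0n : (0 : G₀) ≠ x₀ := fun h => hx₀ h.symm
  have hx0n' : (0 : G₀) ≠ -x₀ := by
    intro h
    exact hx₀ (by rw [← neg_neg x₀, ← h, neg_zero])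
  have hG0univ : (univ : Finset G₀) = {0, x₀, -x₀} := by
    symm
    apply Finset.eq_univ_of_card
    rw [hcard0, Finset.card_insert_of_notMem (by simp [hx0n, hx0n']),
      Finset.card_insert_of_notMem (by simp [hxne]), Finset.card_singleton]
  have hG0elt : eltA (univ : Finset G₀) = AddMonoidAlgebra.single (0 : G₀) (1 : ℤ)
      + AddMonoidAlgebra.single x₀ (1 : ℤ) + AddMonoidAlgebra.single (-x₀) (1 : ℤ) := by
    rw [hG0univ]
    rw [eltA, Finset.sum_insert (by simp [hx0n, hx0n']),
      Finset.sum_insert (by simp [hxne]), Finset.sum_singleton, add_assoc]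
  have h1aa : (1 : AddMonoidAlgebra ℤ (G₀ × G₁ × G₁))
      + mapDomainRingHom ℤ φ₀ (AddMonoidAlgebra.single x₀ (1 : ℤ))
      + mapDomainRingHom ℤ φ₀ (AddMonoidAlgebra.single (-x₀) (1 : ℤ))
      = mapDomainRingHom ℤ φ₀ (eltA (univ : Finset G₀)) := by
    rw [hG0elt, map_add, map_add, ← AddMonoidAlgebra.one_def, map_one]
  have f9 : ((1 : AddMonoidAlgebra ℤ (G₀ × G₁ × G₁))
      + mapDomainRingHom ℤ φ₀ (AddMonoidAlgebra.single x₀ (1 : ℤ))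
      + mapDomainRingHom ℤ φ₀ (AddMonoidAlgebra.single (-x₀) (1 : ℤ))) *
      (mapDomainRingHom ℤ φ₁ (eltA (univ : Finset G₁)) *
        mapDomainRingHom ℤ φ₂ (eltA (univ : Finset G₁)))
      = eltA (univ : Finset (G₀ × G₁ × G₁)) := by
    rw [h1aa, hmap0, hmapJ φ₁, hmapJ φ₂]
    rw [eltA]
    simp only [Finset.sum_mul_sum, Finset.mul_sum, Finset.sum_mul,
      AddMonoidAlgebra.single_mul_single, one_mul, Fintype.sum_prod_type,
      hφ₀a, hφ₁a, hφ₂a, Prod.mk_add_mk, add_zero, zero_add]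
    rw [Finset.sum_comm]
    conv_rhs => rw [Finset.sum_comm]
    refine Finset.sum_congr rfl fun b _ => ?_
    rw [Finset.sum_comm]
  -- ## Conclusion
  rw [hSfact, hDfact, ← AddMonoidAlgebra.one_def]
  simp only [zsmul_eq_mul] at f1 f2 f5 f6 ⊢
  push_cast at f1 f2 f5 f6 ⊢
  linear_combination
    (mapDomainRingHom ℤ φ₂ (eltA (univ : Finset G₁)) *
      mapDomainRingHom ℤ φ₂ (eltA (univ : Finset G₁))) * f8 + f1
    + (mapDomainRingHom ℤ φ₀ (AddMonoidAlgebra.single x₀ (1 : ℤ)) * mapDomainRingHom ℤ φ₁ D'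
      + mapDomainRingHom ℤ φ₀ (AddMonoidAlgebra.single (-x₀) (1 : ℤ)) *
        mapDomainRingHom ℤ φ₁ D') * f4
    + (mapDomainRingHom ℤ φ₂ (AddMonoidAlgebra.single x₁ (1 : ℤ)) * mapDomainRingHom ℤ φ₂ D'
      + mapDomainRingHom ℤ φ₂ (AddMonoidAlgebra.single (-x₁) (1 : ℤ)) *
        mapDomainRingHom ℤ φ₂ D') * f3
    + (mapDomainRingHom ℤ φ₁ (eltA (univ : Finset G₁)) *
        mapDomainRingHom ℤ φ₁ (eltA (univ : Finset G₁))) * f10 + f2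
    + (mapDomainRingHom ℤ φ₀ (AddMonoidAlgebra.single (-x₀) (1 : ℤ)) *
        mapDomainRingHom ℤ φ₁ (eltA (univ : Finset G₁))) * f7a
    + (mapDomainRingHom ℤ φ₀ (AddMonoidAlgebra.single x₀ (1 : ℤ)) *
        mapDomainRingHom ℤ φ₁ (eltA (univ : Finset G₁))) * f7b
    + (mapDomainRingHom ℤ φ₂ D' * mapDomainRingHom ℤ φ₂ D') * f5
    + ((3 : AddMonoidAlgebra ℤ (G₀ × G₁ × G₁)) ^ m
        - mapDomainRingHom ℤ φ₁ (eltA (univ : Finset G₁))) * f6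
    + f9
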